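/- Let B(t) be a d-dimensional standard Brownian motion in the half-space ℝ^{d-1} × ℝ₊ realized as the half-space meander M(t) = (M₁(t),…,M_d(t)) started at σ/√t with |σ| = 1, where M₁,…,M_{d-1} are independent Brownian motions and M_d is a one-dimensional Brownian meander. Then φ(t) := E_{σ/√t}[ e^{-|M(1)|²/4} ] satisfies φ(t) = o(e^{-c/t}) as t → 0⁺ for some constant c > 0. -/

import Mathlib

open MeasureTheory Filter Asymptotics

/-- Density at time 1 of a one-dimensional Brownian motion started at `m`. -/
noncomputable def gaussianDensity (m z : ℝ) : ℝ :=
  Real.exp (-(z - m) ^ 2 / 2) / Real.sqrt (2 * Real.pi)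

/-- Density at time 1 of the one-dimensional Brownian meander started at `a ≥ 0`
(Brownian motion conditioned to stay positive on `[0,1]`; for `a = 0` the standard
Brownian meander, cf. Durrett–Iglehart–Miller). -/
noncomputable def meanderDensity (a z : ℝ) : ℝ :=
  if z ≤ 0 then 0
  else if a = 0 then z * Real.exp (-z ^ 2 / 2)
  else (gaussianDensity a z - gaussianDensity (-a) z) /
    ∫ u in Set.Ioo (-a) a, gaussianDensity 0 u

lemma gauss_nonneg (m z : ℝ) : 0 ≤ gaussianDensity m z :=
  div_nonneg (Real.exp_pos _).le (Real.sqrt_nonneg _)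

lemma dom_integrable (c : ℝ) : Integrable (fun z : ℝ => Real.exp (-(3/4) * (z - c)^2)) :=
  (integrable_exp_neg_mul_sq (by norm_num : (0:ℝ) < 3/4)).comp_sub_right c

lemma dom_integral (c : ℝ) : ∫ z : ℝ, Real.exp (-(3/4) * (z - c)^2) = Real.sqrt (Real.pi/(3/4)) := by
  rw [MeasureTheory.integral_sub_right_eq_self (fun u => Real.exp (-(3/4) * u^2)) c]
  exact integral_gaussian _

lemma gauss_pointwise (m z : ℝ) :
    gaussianDensity m z * Real.exp (-z^2/4) ≤
      Real.exp (-m^2/6) / Real.sqrt (2*Real.pi) * Real.exp (-(3/4) * (z - 2*m/3)^2) := by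
  have h2 : (0:ℝ) < Real.sqrt (2*Real.pi) := Real.sqrt_pos.2 (by positivity)
  rw [gaussianDensity, div_mul_eq_mul_div, div_mul_eq_mul_div, div_le_div_iff₀ h2 h2]
  rw [← Real.exp_add, ← Real.exp_add]
  have : -(z - m) ^ 2 / 2 + -z ^ 2 / 4 = -m^2/6 + -(3/4) * (z - 2*m/3)^2 := by ring
  rw [this]

lemma gauss_int_le (m : ℝ) :
    ∫ z : ℝ, gaussianDensity m z * Real.exp (-z^2/4) ≤ Real.exp (-m^2/6) := by
  have h2 : (0:ℝ) < Real.sqrt (2*Real.pi) := Real.sqrt_pos.2 (by positivity)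
  have hg : Integrable (fun z : ℝ =>
      Real.exp (-m^2/6) / Real.sqrt (2*Real.pi) * Real.exp (-(3/4) * (z - 2*m/3)^2)) :=
    (dom_integrable _).const_mul _
  have h1 : ∫ z : ℝ, gaussianDensity m z * Real.exp (-z^2/4) ≤
      ∫ z : ℝ, Real.exp (-m^2/6) / Real.sqrt (2*Real.pi) * Real.exp (-(3/4) * (z - 2*m/3)^2) := by
    refine integral_mono_of_nonneg ?_ hg ?_
    · exact Filter.Eventually.of_forall fun z => mul_nonneg (gauss_nonneg _ _) (Real.exp_pos _).le
    · exact Filter.Eventually.of_forall fun z => gauss_pointwise m z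
  refine h1.trans ?_
  rw [integral_const_mul, dom_integral]
  rw [div_mul_eq_mul_div, div_le_iff₀ h2]
  have hs : Real.sqrt (Real.pi/(3/4)) ≤ Real.sqrt (2*Real.pi) := by
    apply Real.sqrt_le_sqrt; nlinarith [Real.pi_pos]
  calc Real.exp (-m^2/6) * Real.sqrt (Real.pi/(3/4))
      ≤ Real.exp (-m^2/6) * Real.sqrt (2*Real.pi) :=
        mul_le_mul_of_nonneg_left hs (Real.exp_pos _).le

lemma gauss_int_nonneg (m : ℝ) : 0 ≤ ∫ z : ℝ, gaussianDensity m z * Real.exp (-z^2/4) :=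
  integral_nonneg fun z => mul_nonneg (gauss_nonneg _ _) (Real.exp_pos _).le

lemma gauss0_integrable : Integrable (gaussianDensity 0) := by
  have : Integrable (fun u : ℝ => Real.exp (-(1/2) * u^2)) :=
    integrable_exp_neg_mul_sq (by norm_num)
  refine (this.div_const (Real.sqrt (2*Real.pi))).congr ?_
  refine Filter.Eventually.of_forall fun u => ?_
  simp only [gaussianDensity, sub_zero]
  ring_nf

noncomputable def DD (a : ℝ) : ℝ := ∫ u in Set.Ioo (-a) a, gaussianDensity 0 u

lemma D_nonneg (a : ℝ) : 0 ≤ DD a :=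
  integral_nonneg fun u => gauss_nonneg _ _

lemma D_pos (a : ℝ) (ha : 0 < a) : 0 < DD a := by
  have hlb : Real.exp (-a^2/2) / Real.sqrt (2*Real.pi) * (2*a) ≤ DD a := by
    have hvol : (volume (Set.Ioo (-a) a)).toReal = 2*a := by
      rw [Real.volume_Ioo, ENNReal.toReal_ofReal (by linarith)]; ring
    have hconst : ∫ u in Set.Ioo (-a) a, (Real.exp (-a^2/2) / Real.sqrt (2*Real.pi)) =
        Real.exp (-a^2/2) / Real.sqrt (2*Real.pi) * (2*a) := by
      rw [setIntegral_const, smul_eq_mul, measureReal_def, hvol]; ring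
    rw [← hconst]
    refine setIntegral_mono_on (integrableOn_const ?_)
      (gauss0_integrable.integrableOn) measurableSet_Ioo ?_
    · rw [Real.volume_Ioo]; exact ENNReal.ofReal_ne_top
    · intro x hx
      simp only [gaussianDensity, sub_zero]
      rw [div_le_div_iff_of_pos_right (Real.sqrt_pos.2 (by positivity))]
      apply Real.exp_le_exp.2
      have h1 : -a < x := hx.1
      have h2 : x < a := hx.2
      nlinarith
  have : (0:ℝ) < Real.exp (-a^2/2) / Real.sqrt (2*Real.pi) * (2*a) := by positivity
  linarith

lemma D_mono {a b : ℝ} (ha : 0 < a) (h : a ≤ b) : DD a ≤ DD b := by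
  refine setIntegral_mono_set gauss0_integrable.integrableOn
    (Filter.Eventually.of_forall fun u => gauss_nonneg _ _) ?_
  refine HasSubset.Subset.eventuallyLE ?_
  exact Set.Ioo_subset_Ioo (by linarith) h

lemma meander_num_nonneg {a z : ℝ} (ha : 0 < a) (hz : 0 < z) :
    0 ≤ gaussianDensity a z - gaussianDensity (-a) z := by
  rw [gaussianDensity, gaussianDensity, div_sub_div_same]
  apply div_nonneg ?_ (Real.sqrt_nonneg _)
  rw [sub_nonneg]
  apply Real.exp_le_exp.2
  rw [div_le_div_iff_of_pos_right (by norm_num), neg_le_neg_iff]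
  nlinarith

lemma meander_nonneg {a : ℝ} (ha : 0 ≤ a) (z : ℝ) : 0 ≤ meanderDensity a z := by
  unfold meanderDensity
  split_ifs with h1 h2
  · exact le_refl 0
  · exact mul_nonneg (le_of_lt (not_le.1 h1)) (Real.exp_pos _).le
  · have ha' : 0 < a := lt_of_le_of_ne ha (Ne.symm h2)
    exact div_nonneg (meander_num_nonneg ha' (not_le.1 h1)) (D_nonneg a)

lemma meander_int_zero : ∫ z : ℝ, meanderDensity 0 z * Real.exp (-z^2/4) ≤ 4 := by
  have hint : Integrable (fun z : ℝ => Real.exp (-(1/4) * z^2)) :=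
    integrable_exp_neg_mul_sq (by norm_num)
  have h1 : ∫ z : ℝ, meanderDensity 0 z * Real.exp (-z^2/4) ≤
      ∫ z : ℝ, Real.exp (-(1/4) * z^2) := by
    refine integral_mono_of_nonneg
      (Filter.Eventually.of_forall fun z => mul_nonneg (meander_nonneg le_rfl z) (Real.exp_pos _).le)
      hint (Filter.Eventually.of_forall fun z => ?_)
    dsimp only
    by_cases h1 : z ≤ 0
    · simp only [meanderDensity, if_pos h1, zero_mul]
      positivity
    · push_neg at h1
      rw [show meanderDensity 0 z = z * Real.exp (-z^2/2) from by
        simp [meanderDensity, not_le.2 h1]]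
      have key : z * Real.exp (-z^2/2) ≤ 1 := by
        have h2 : z ≤ Real.exp (z^2/2) := by
          have := Real.add_one_le_exp (z^2/2)
          nlinarith
        have h3 : (0:ℝ) < Real.exp (-z^2/2) := Real.exp_pos _
        calc z * Real.exp (-z^2/2) ≤ Real.exp (z^2/2) * Real.exp (-z^2/2) :=
              mul_le_mul_of_nonneg_right h2 h3.le
          _ = 1 := by rw [← Real.exp_add]; ring_nf; exact Real.exp_zero
      have heq : -(1/4) * z^2 = -z^2/4 := by ring
      rw [heq]
      nlinarith [Real.exp_pos (-z^2/4)]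
  refine h1.trans ?_
  rw [integral_gaussian]
  have : Real.sqrt (Real.pi / (1/4)) ≤ Real.sqrt 16 := by
    apply Real.sqrt_le_sqrt; nlinarith [Real.pi_le_four]
  calc Real.sqrt (Real.pi / (1/4)) ≤ Real.sqrt 16 := this
    _ = 4 := by
        rw [show (16:ℝ) = 4^2 by norm_num, Real.sqrt_sq (by norm_num)]

lemma meander_int_le {a a₀ : ℝ} (h0 : 0 < a₀) (h : a₀ ≤ a) :
    ∫ z : ℝ, meanderDensity a z * Real.exp (-z^2/4) ≤ Real.exp (-a^2/6) / DD a₀ := by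
  have ha : 0 < a := lt_of_lt_of_le h0 h
  have hD0 : 0 < DD a₀ := D_pos a₀ h0
  have hDm : DD a₀ ≤ DD a := D_mono h0 h
  have hg : Integrable (fun z : ℝ =>
      Real.exp (-a^2/6) / Real.sqrt (2*Real.pi) * Real.exp (-(3/4) * (z - 2*a/3)^2) / DD a₀) :=
    ((dom_integrable _).const_mul _).div_const _
  have h1 : ∫ z : ℝ, meanderDensity a z * Real.exp (-z^2/4) ≤
      ∫ z : ℝ, Real.exp (-a^2/6) / Real.sqrt (2*Real.pi) *
        Real.exp (-(3/4) * (z - 2*a/3)^2) / DD a₀ := by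
    refine integral_mono_of_nonneg
      (Filter.Eventually.of_forall fun z => mul_nonneg (meander_nonneg ha.le z) (Real.exp_pos _).le)
      hg (Filter.Eventually.of_forall fun z => ?_)
    dsimp only
    by_cases hz1 : z ≤ 0
    · simp only [meanderDensity, if_pos hz1, zero_mul]
      positivity
    · have hm : meanderDensity a z =
          (gaussianDensity a z - gaussianDensity (-a) z) / DD a := by
        simp only [meanderDensity, if_neg hz1, if_neg (ne_of_gt ha)]; rfl
      rw [hm]
      push_neg at hz1
      calc (gaussianDensity a z - gaussianDensity (-a) z) / DD a * Real.exp (-z^2/4)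
          ≤ gaussianDensity a z / DD a₀ * Real.exp (-z^2/4) := by
            apply mul_le_mul_of_nonneg_right ?_ (Real.exp_pos _).le
            apply div_le_div₀ (gauss_nonneg _ _)
              (sub_le_self _ (gauss_nonneg _ _)) hD0 hDm
        _ = gaussianDensity a z * Real.exp (-z^2/4) / DD a₀ := by ring
        _ ≤ Real.exp (-a^2/6) / Real.sqrt (2*Real.pi) *
              Real.exp (-(3/4) * (z - 2*a/3)^2) / DD a₀ := by
            exact (div_le_div_iff_of_pos_right hD0).2 (gauss_pointwise a z)
  refine h1.trans ?_
  rw [integral_div, integral_const_mul, dom_integral]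
  have h2 : (0:ℝ) < Real.sqrt (2*Real.pi) := Real.sqrt_pos.2 (by positivity)
  refine (div_le_div_iff_of_pos_right hD0).2 ?_
  rw [div_mul_eq_mul_div, div_le_iff₀ h2]
  have hs : Real.sqrt (Real.pi/(3/4)) ≤ Real.sqrt (2*Real.pi) := by
    apply Real.sqrt_le_sqrt; nlinarith [Real.pi_pos]
  exact mul_le_mul_of_nonneg_left hs (Real.exp_pos _).le

/-- For the half-space meander `M(t) = (M₁,…,M_d)` started at `σ/√t` with `|σ| = 1`, where
`M₁,…,M_{d-1}` are independent Brownian motions and `M_d` is a one-dimensional Brownian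
meander, `φ(t) = E_{σ/√t}[e^{-|M(1)|²/4}]` satisfies `φ(t) = o(e^{-c/t})` as `t → 0⁺`
for some `c > 0`. -/
theorem stmt_12 (m : ℕ) (σ : Fin (m + 1) → ℝ)
    (hσ : ∑ i, σ i ^ 2 = 1) (hσd : 0 ≤ σ (Fin.last m))
    (φ : ℝ → ℝ)
    (hφ : ∀ t : ℝ, 0 < t → φ t =
      (∏ i : Fin m, ∫ z : ℝ,
        gaussianDensity (σ i.castSucc / Real.sqrt t) z * Real.exp (-z ^ 2 / 4)) *
      ∫ z : ℝ, meanderDensity (σ (Fin.last m) / Real.sqrt t) z * Real.exp (-z ^ 2 / 4)) :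
    ∃ c : ℝ, 0 < c ∧ φ =o[nhdsWithin 0 (Set.Ioi 0)] fun t => Real.exp (-c / t) := by
  set s := σ (Fin.last m) with hsdef
  -- sum decomposition
  have hsum : ∑ i : Fin m, σ i.castSucc ^ 2 = 1 - s ^ 2 := by
    have := Fin.sum_univ_castSucc (fun i => σ i ^ 2)
    rw [hσ] at this
    linarith [this]
  -- existence of a uniform bound
  have key : ∃ C : ℝ, 0 < C ∧ ∀ t : ℝ, 0 < t → t ≤ 1 →
      0 ≤ φ t ∧ φ t ≤ C * Real.exp (-(1/6)/t) := by
    rcases eq_or_lt_of_le hσd with hs0 | hs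
    · -- s = 0
      refine ⟨4, by norm_num, fun t ht ht1 => ?_⟩
      have hst : 0 < Real.sqrt t := Real.sqrt_pos.2 ht
      have hst1 : Real.sqrt t ≤ 1 := by
        rw [show (1:ℝ) = Real.sqrt 1 by simp]
        exact Real.sqrt_le_sqrt ht1
      have hP : (∏ i : Fin m, ∫ z : ℝ,
          gaussianDensity (σ i.castSucc / Real.sqrt t) z * Real.exp (-z ^ 2 / 4)) ≤
          Real.exp (-(1 - s^2)/(6*t)) := by
        calc (∏ i : Fin m, ∫ z : ℝ,
            gaussianDensity (σ i.castSucc / Real.sqrt t) z * Real.exp (-z ^ 2 / 4))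
            ≤ ∏ i : Fin m, Real.exp (-(σ i.castSucc)^2/(6*t)) := by
              refine Finset.prod_le_prod (fun i _ => gauss_int_nonneg _) (fun i _ => ?_)
              refine (gauss_int_le _).trans_eq ?_
              congr 1
              rw [div_pow, Real.sq_sqrt ht.le]
              ring
          _ = Real.exp (∑ i : Fin m, -(σ i.castSucc)^2/(6*t)) := (Real.exp_sum _ _).symm
          _ = Real.exp (-(1 - s^2)/(6*t)) := by
              congr 1
              rw [← Finset.sum_div, Finset.sum_neg_distrib, hsum]
      have hPnn : (0:ℝ) ≤ ∏ i : Fin m, ∫ z : ℝ,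
          gaussianDensity (σ i.castSucc / Real.sqrt t) z * Real.exp (-z ^ 2 / 4) :=
        Finset.prod_nonneg fun i _ => gauss_int_nonneg _
      have ha0 : s / Real.sqrt t = 0 := by rw [← hs0, zero_div]
      have hI : ∫ z : ℝ, meanderDensity (s / Real.sqrt t) z * Real.exp (-z ^ 2 / 4) ≤ 4 := by
        rw [ha0]; exact meander_int_zero
      have hInn : (0:ℝ) ≤ ∫ z : ℝ, meanderDensity (s / Real.sqrt t) z * Real.exp (-z ^ 2 / 4) :=
        integral_nonneg fun z => mul_nonneg
          (meander_nonneg (by rw [ha0]) z) (Real.exp_pos _).le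
      rw [hφ t ht]
      constructor
      · exact mul_nonneg hPnn hInn
      · calc (∏ i : Fin m, ∫ z : ℝ,
            gaussianDensity (σ i.castSucc / Real.sqrt t) z * Real.exp (-z ^ 2 / 4)) *
            ∫ z : ℝ, meanderDensity (s / Real.sqrt t) z * Real.exp (-z ^ 2 / 4)
            ≤ Real.exp (-(1 - s^2)/(6*t)) * 4 :=
              mul_le_mul hP hI hInn (Real.exp_pos _).le
          _ = 4 * Real.exp (-(1/6)/t) := by
              rw [← hs0, show -((1:ℝ) - 0^2)/(6*t) = -(1/6)/t from by ring]
              ring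
    · -- 0 < s
      refine ⟨1 / DD s, by have := D_pos s hs; positivity, fun t ht ht1 => ?_⟩
      have hst : 0 < Real.sqrt t := Real.sqrt_pos.2 ht
      have hst1 : Real.sqrt t ≤ 1 := by
        rw [show (1:ℝ) = Real.sqrt 1 by simp]
        exact Real.sqrt_le_sqrt ht1
      have hage : s ≤ s / Real.sqrt t := by
        rw [le_div_iff₀ hst]
        nlinarith
      have hP : (∏ i : Fin m, ∫ z : ℝ,
          gaussianDensity (σ i.castSucc / Real.sqrt t) z * Real.exp (-z ^ 2 / 4)) ≤
          Real.exp (-(1 - s^2)/(6*t)) := by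
        calc (∏ i : Fin m, ∫ z : ℝ,
            gaussianDensity (σ i.castSucc / Real.sqrt t) z * Real.exp (-z ^ 2 / 4))
            ≤ ∏ i : Fin m, Real.exp (-(σ i.castSucc)^2/(6*t)) := by
              refine Finset.prod_le_prod (fun i _ => gauss_int_nonneg _) (fun i _ => ?_)
              refine (gauss_int_le _).trans_eq ?_
              congr 1
              rw [div_pow, Real.sq_sqrt ht.le]
              ring
          _ = Real.exp (∑ i : Fin m, -(σ i.castSucc)^2/(6*t)) := (Real.exp_sum _ _).symm
          _ = Real.exp (-(1 - s^2)/(6*t)) := by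
              congr 1
              rw [← Finset.sum_div, Finset.sum_neg_distrib, hsum]
      have hPnn : (0:ℝ) ≤ ∏ i : Fin m, ∫ z : ℝ,
          gaussianDensity (σ i.castSucc / Real.sqrt t) z * Real.exp (-z ^ 2 / 4) :=
        Finset.prod_nonneg fun i _ => gauss_int_nonneg _
      have hI : ∫ z : ℝ, meanderDensity (s / Real.sqrt t) z * Real.exp (-z ^ 2 / 4) ≤
          Real.exp (-(s/Real.sqrt t)^2/6) / DD s := meander_int_le hs hage
      have hInn : (0:ℝ) ≤ ∫ z : ℝ, meanderDensity (s / Real.sqrt t) z * Real.exp (-z ^ 2 / 4) :=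
        integral_nonneg fun z => mul_nonneg
          (meander_nonneg (le_trans hs.le hage) z) (Real.exp_pos _).le
      have hIeq : Real.exp (-(s/Real.sqrt t)^2/6) / DD s = Real.exp (-s^2/(6*t)) / DD s := by
        congr 2
        rw [div_pow, Real.sq_sqrt ht.le]
        ring
      rw [hφ t ht]
      refine ⟨mul_nonneg hPnn hInn, ?_⟩
      calc (∏ i : Fin m, ∫ z : ℝ,
          gaussianDensity (σ i.castSucc / Real.sqrt t) z * Real.exp (-z ^ 2 / 4)) *
          ∫ z : ℝ, meanderDensity (s / Real.sqrt t) z * Real.exp (-z ^ 2 / 4)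
          ≤ Real.exp (-(1 - s^2)/(6*t)) * (Real.exp (-s^2/(6*t)) / DD s) := by
            rw [← hIeq]
            exact mul_le_mul hP hI hInn (Real.exp_pos _).le
        _ = 1 / DD s * Real.exp (-(1/6)/t) := by
            rw [div_eq_mul_one_div (Real.exp (-s^2/(6*t))) (DD s), ← mul_assoc, ← Real.exp_add,
              show -(1 - s^2)/(6*t) + -s^2/(6*t) = -(1/6)/t from by ring]
            ring
  obtain ⟨C, hC, hbound⟩ := key
  refine ⟨1/12, by norm_num, ?_⟩
  have hO : φ =O[nhdsWithin 0 (Set.Ioi 0)] fun t => Real.exp (-(1/6)/t) := by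
    rw [isBigO_iff]
    refine ⟨C, ?_⟩
    have hmem : Set.Ioc (0:ℝ) 1 ∈ nhdsWithin (0:ℝ) (Set.Ioi 0) :=
      Ioc_mem_nhdsGT_of_mem (by constructor <;> norm_num)
    filter_upwards [hmem] with t ht
    obtain ⟨h0, h1⟩ := hbound t ht.1 ht.2
    rw [Real.norm_eq_abs, Real.norm_eq_abs, abs_of_nonneg h0,
      abs_of_pos (Real.exp_pos _)]
    exact h1
  have ho : (fun t : ℝ => Real.exp (-(1/6)/t)) =o[nhdsWithin 0 (Set.Ioi 0)]
      fun t => Real.exp (-(1/12)/t) := by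
    rw [isLittleO_iff_tendsto' (Filter.Eventually.of_forall fun x hx =>
      absurd hx (Real.exp_ne_zero _))]
    have heq : (fun t : ℝ => Real.exp (-(1/6)/t) / Real.exp (-(1/12)/t)) =
        fun t : ℝ => Real.exp (-((1/12) * t⁻¹)) := by
      funext t
      rw [← Real.exp_sub]
      congr 1
      ring
    rw [heq]
    refine Real.tendsto_exp_atBot.comp ?_
    refine tendsto_neg_atTop_atBot.comp ?_
    exact Tendsto.const_mul_atTop (by norm_num) tendsto_inv_nhdsGT_zero
  exact hO.trans_isLittleO ho
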